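/- With the data of the context, at every point ℓ_S∈Ω₀ with H₂₃(ℓ_S)=0 one has: D(H̃₂−H₂)(ℓ_S)=0, the second derivative satisfies D²(H̃₂−H₂)(ℓ_S)[δℓ,δℓ] = ⟨DH₂₃(ℓ_S),δℓ⟩² / 𝔏(ℓ_S) for all δℓ∈ℝ²ⁿ, and consequently the Hamiltonian vector fields agree: ⃗H̃₂(ℓ_S) = ⃗H₂(ℓ_S). (Lemma 4.1, item 2.) -/

import Mathlib

open Set
open scoped InnerProductSpace

noncomputable section

/-- Base space `ℝⁿ`. -/
abbrev E (n : ℕ) := EuclideanSpace ℝ (Fin n)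

/-- Phase space `T*ℝⁿ ≃ ℝⁿ × ℝⁿ`, points `ℓ = (p,x)`. -/
abbrev P (n : ℕ) := E n × E n

/-- Partial gradient `∂ₚH`. -/
def gradP {n : ℕ} (H : P n → ℝ) (ℓ : P n) : E n :=
  gradient (fun p => H (p, ℓ.2)) ℓ.1

/-- Partial gradient `∂ₓH`. -/
def gradX {n : ℕ} (H : P n → ℝ) (ℓ : P n) : E n :=
  gradient (fun x => H (ℓ.1, x)) ℓ.2

/-- Poisson bracket `{F,G} = ⟨∂ₚF,∂ₓG⟩ − ⟨∂ₓF,∂ₚG⟩`. -/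
def poisson {n : ℕ} (F G : P n → ℝ) (ℓ : P n) : ℝ :=
  ⟪gradP F ℓ, gradX G ℓ⟫_ℝ - ⟪gradX F ℓ, gradP G ℓ⟫_ℝ

/-- Hamiltonian vector field `⃗H = (−∂ₓH, ∂ₚH)`. -/
def hamVF {n : ℕ} (H : P n → ℝ) (ℓ : P n) : P n :=
  (-gradX H ℓ, gradP H ℓ)

open InnerProductSpace

lemma gradP_eq {n : ℕ} {H : P n → ℝ} {ℓ : P n} (h : DifferentiableAt ℝ H ℓ) :
    gradP H ℓ = (toDual ℝ (E n)).symm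
      ((fderiv ℝ H ℓ).comp (ContinuousLinearMap.inl ℝ (E n) (E n))) := by
  have h1 : HasFDerivAt (fun p : E n => H (p, ℓ.2))
      ((fderiv ℝ H ℓ).comp (ContinuousLinearMap.inl ℝ (E n) (E n))) ℓ.1 :=
    h.hasFDerivAt.comp ℓ.1 (hasFDerivAt_prodMk_left ℓ.1 ℓ.2)
  rw [gradP, gradient, h1.fderiv]

lemma gradX_eq {n : ℕ} {H : P n → ℝ} {ℓ : P n} (h : DifferentiableAt ℝ H ℓ) :
    gradX H ℓ = (toDual ℝ (E n)).symm
      ((fderiv ℝ H ℓ).comp (ContinuousLinearMap.inr ℝ (E n) (E n))) := by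
  have h1 : HasFDerivAt (fun x : E n => H (ℓ.1, x))
      ((fderiv ℝ H ℓ).comp (ContinuousLinearMap.inr ℝ (E n) (E n))) ℓ.2 :=
    h.hasFDerivAt.comp ℓ.2 (hasFDerivAt_prodMk_right ℓ.1 ℓ.2)
  rw [gradX, gradient, h1.fderiv]

lemma fderiv_apply_grad {n : ℕ} {H : P n → ℝ} {ℓ : P n} (h : DifferentiableAt ℝ H ℓ) (v : P n) :
    fderiv ℝ H ℓ v = ⟪gradP H ℓ, v.1⟫_ℝ + ⟪gradX H ℓ, v.2⟫_ℝ := by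
  rw [gradP_eq h, gradX_eq h, toDual_symm_apply, toDual_symm_apply]
  have : v = (v.1, (0 : E n)) + ((0 : E n), v.2) := by simp
  conv_lhs => rw [this]
  rw [map_add]
  rfl

lemma fderiv_hamVF {n : ℕ} {H F : P n → ℝ} {ℓ : P n} (hH : DifferentiableAt ℝ H ℓ) :
    fderiv ℝ H ℓ (hamVF F ℓ) = -poisson H F ℓ := by
  rw [fderiv_apply_grad hH]
  simp [hamVF, poisson, inner_neg_right, real_inner_comm]
  ring

lemma poisson_antisymm {n : ℕ} (F G : P n → ℝ) (ℓ : P n) :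
    poisson F G ℓ = -poisson G F ℓ := by
  unfold poisson
  rw [real_inner_comm (gradP F ℓ), real_inner_comm (gradX F ℓ)]
  ring

lemma diffAt_of_contDiffOn {E' F' : Type*} [NormedAddCommGroup E'] [NormedSpace ℝ E']
    [NormedAddCommGroup F'] [NormedSpace ℝ F'] {f : E' → F'} {s : Set E'} {x : E'}
    {m : WithTop ℕ∞} (hf : ContDiffOn ℝ m f s) (hs : IsOpen s) (hx : x ∈ s) (hm : 1 ≤ m) :
    DifferentiableAt ℝ f x :=
  (hf.differentiableOn (lt_of_lt_of_le zero_lt_one hm).ne').differentiableAt (hs.mem_nhds hx)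

lemma one_le_inf : (1 : WithTop ℕ∞) ≤ ((⊤ : ℕ∞) : WithTop ℕ∞) := by
  exact_mod_cast (le_top : (1 : ℕ∞) ≤ ⊤)

lemma contDiffOn_gradP {n : ℕ} {H : P n → ℝ} {Ω : Set (P n)} (hΩ : IsOpen Ω)
    (hH : ContDiffOn ℝ (⊤ : ℕ∞) H Ω) : ContDiffOn ℝ (⊤ : ℕ∞) (gradP H) Ω := by
  have hfd : ContDiffOn ℝ (⊤ : ℕ∞) (fderiv ℝ H) Ω := hH.fderiv_of_isOpen hΩ (by simp)
  have hc : ContDiff ℝ (⊤ : ℕ∞) (fun T : P n →L[ℝ] ℝ =>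
      (toDual ℝ (E n)).symm (T.comp (ContinuousLinearMap.inl ℝ (E n) (E n)))) :=
    ((toDual ℝ (E n)).symm.toContinuousLinearEquiv.toContinuousLinearMap.contDiff).comp
      (((ContinuousLinearMap.compL ℝ (E n) (P n) ℝ).flip
        (ContinuousLinearMap.inl ℝ (E n) (E n))).contDiff)
  exact (hc.comp_contDiffOn hfd).congr fun ℓ hℓ =>
    gradP_eq (diffAt_of_contDiffOn hH hΩ hℓ (by simp))

lemma contDiffOn_gradX {n : ℕ} {H : P n → ℝ} {Ω : Set (P n)} (hΩ : IsOpen Ω)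
    (hH : ContDiffOn ℝ (⊤ : ℕ∞) H Ω) : ContDiffOn ℝ (⊤ : ℕ∞) (gradX H) Ω := by
  have hfd : ContDiffOn ℝ (⊤ : ℕ∞) (fderiv ℝ H) Ω := hH.fderiv_of_isOpen hΩ (by simp)
  have hc : ContDiff ℝ (⊤ : ℕ∞) (fun T : P n →L[ℝ] ℝ =>
      (toDual ℝ (E n)).symm (T.comp (ContinuousLinearMap.inr ℝ (E n) (E n)))) :=
    ((toDual ℝ (E n)).symm.toContinuousLinearEquiv.toContinuousLinearMap.contDiff).comp
      (((ContinuousLinearMap.compL ℝ (E n) (P n) ℝ).flip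
        (ContinuousLinearMap.inr ℝ (E n) (E n))).contDiff)
  exact (hc.comp_contDiffOn hfd).congr fun ℓ hℓ =>
    gradX_eq (diffAt_of_contDiffOn hH hΩ hℓ (by simp))

lemma contDiffOn_poisson {n : ℕ} {F G : P n → ℝ} {Ω : Set (P n)} (hΩ : IsOpen Ω)
    (hF : ContDiffOn ℝ (⊤ : ℕ∞) F Ω) (hG : ContDiffOn ℝ (⊤ : ℕ∞) G Ω) :
    ContDiffOn ℝ (⊤ : ℕ∞) (poisson F G) Ω :=
  ((contDiffOn_gradP hΩ hF).inner ℝ (contDiffOn_gradX hΩ hG)).sub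
    ((contDiffOn_gradX hΩ hF).inner ℝ (contDiffOn_gradP hΩ hG))

lemma fderiv_apply_comm {E' F' G' : Type*} [NormedAddCommGroup E'] [NormedSpace ℝ E']
    [NormedAddCommGroup F'] [NormedSpace ℝ F'] [NormedAddCommGroup G'] [NormedSpace ℝ G']
    {c : E' → F' →L[ℝ] G'} {x : E'} (hc : DifferentiableAt ℝ c x) (w : F') (u : E') :
    fderiv ℝ (fun y => c y w) x u = fderiv ℝ c x u w := by
  have h := ((ContinuousLinearMap.apply ℝ G' w).hasFDerivAt.comp x hc.hasFDerivAt).fderiv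
  have h2 : fderiv ℝ (fun y => c y w) x
      = (ContinuousLinearMap.apply ℝ G' w).comp (fderiv ℝ c x) := h
  rw [h2]; rfl

/-- **Lemma 4.1, item 2**: at every point `ℓ_S` with `H₂₃(ℓ_S) = 0` one has
`D(H̃₂ − H₂)(ℓ_S) = 0`, `D²(H̃₂ − H₂)(ℓ_S)[δℓ,δℓ] = ⟨DH₂₃(ℓ_S),δℓ⟩²/𝔏(ℓ_S)`, and the
Hamiltonian vector fields of `H̃₂` and `H₂` agree at `ℓ_S`. -/
theorem overmaximised_hamiltonian_second_order {n : ℕ}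
    (Ω Ω₀ : Set (P n)) (hΩ : IsOpen Ω) (hΩ₀ : IsOpen Ω₀) (hΩ₀Ω : Ω₀ ⊆ Ω)
    (H2 F1 : P n → ℝ) (hH2 : ContDiffOn ℝ (⊤ : ℕ∞) H2 Ω) (hF1 : ContDiffOn ℝ (⊤ : ℕ∞) F1 Ω)
    (hL : ∀ ℓ ∈ Ω, 0 < poisson F1 (poisson H2 F1) ℓ)
    (ε : ℝ) (hε : 0 < ε)
    (Φ : ℝ → P n → P n)
    (hΦsm : ContDiffOn ℝ (⊤ : ℕ∞) (fun q : ℝ × P n => Φ q.1 q.2) (Ioo (-ε) ε ×ˢ Ω₀))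
    (hΦ0 : ∀ ℓ ∈ Ω₀, Φ 0 ℓ = ℓ)
    (hΦin : ∀ ℓ ∈ Ω₀, ∀ s ∈ Ioo (-ε) ε, Φ s ℓ ∈ Ω)
    (hΦflow : ∀ ℓ ∈ Ω₀, ∀ s ∈ Ioo (-ε) ε,
      HasDerivAt (fun r => Φ r ℓ) (hamVF F1 (Φ s ℓ)) s)
    (θ : P n → ℝ) (hθsm : ContDiffOn ℝ (⊤ : ℕ∞) θ Ω₀)
    (hθrange : ∀ ℓ ∈ Ω₀, θ ℓ ∈ Ioo (-ε) ε)
    (hθ : ∀ ℓ ∈ Ω₀, poisson H2 F1 (Φ (θ ℓ) ℓ) = 0)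
    (hθ0 : ∀ ℓ ∈ Ω₀, poisson H2 F1 ℓ = 0 → θ ℓ = 0)
    (ℓS : P n) (hℓS : ℓS ∈ Ω₀) (hℓS0 : poisson H2 F1 ℓS = 0) :
    fderiv ℝ (fun ℓ => H2 (Φ (θ ℓ) ℓ) - H2 ℓ) ℓS = 0 ∧
      (∀ δℓ : P n,
        fderiv ℝ (fun ℓ => fderiv ℝ (fun ℓ' => H2 (Φ (θ ℓ') ℓ') - H2 ℓ') ℓ δℓ) ℓS δℓ =
          (fderiv ℝ (poisson H2 F1) ℓS δℓ) ^ 2 / poisson F1 (poisson H2 F1) ℓS) ∧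
      hamVF (fun ℓ => H2 (Φ (θ ℓ) ℓ)) ℓS = hamVF H2 ℓS := by
  classical
  -- Setup
  set U : Set (ℝ × P n) := Ioo (-ε) ε ×ˢ Ω₀ with hUdef
  have hUopen : IsOpen U := isOpen_Ioo.prod hΩ₀
  set Q : ℝ × P n → P n := fun q => Φ q.1 q.2 with hQdef
  set G : ℝ × P n → ℝ := fun q => H2 (Q q) with hGdef
  set σ : P n → ℝ × P n := fun ℓ => (θ ℓ, ℓ) with hσdef
  have h0ε : (0 : ℝ) ∈ Ioo (-ε) ε := ⟨by linarith, hε⟩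
  have hmem0 : ∀ ℓ ∈ Ω₀, ((0 : ℝ), ℓ) ∈ U := fun ℓ h => ⟨h0ε, h⟩
  have hmemσ : ∀ ℓ ∈ Ω₀, σ ℓ ∈ U := fun ℓ h => ⟨hθrange ℓ h, h⟩
  have hQmaps : MapsTo Q U Ω := fun q hq => hΦin q.2 hq.2 q.1 hq.1
  have hQsm : ContDiffOn ℝ (⊤ : ℕ∞) Q U := hΦsm
  have hGsm : ContDiffOn ℝ (⊤ : ℕ∞) G U := hH2.comp hQsm hQmaps
  have hσsm : ContDiffOn ℝ (⊤ : ℕ∞) σ Ω₀ := hθsm.prodMk contDiffOn_id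
  have hH23sm : ContDiffOn ℝ (⊤ : ℕ∞) (poisson H2 F1) Ω := contDiffOn_poisson hΩ hH2 hF1
  -- differentiability
  have hH2d : ∀ ℓ' ∈ Ω, DifferentiableAt ℝ H2 ℓ' := fun ℓ' h =>
    diffAt_of_contDiffOn hH2 hΩ h (by simp)
  have hF1d : ∀ ℓ' ∈ Ω, DifferentiableAt ℝ F1 ℓ' := fun ℓ' h =>
    diffAt_of_contDiffOn hF1 hΩ h (by simp)
  have hH23d : ∀ ℓ' ∈ Ω, DifferentiableAt ℝ (poisson H2 F1) ℓ' := fun ℓ' h =>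
    diffAt_of_contDiffOn hH23sm hΩ h one_le_inf
  have hGd : ∀ q ∈ U, DifferentiableAt ℝ G q := fun q h =>
    diffAt_of_contDiffOn hGsm hUopen h (by simp)
  have hQd : ∀ q ∈ U, DifferentiableAt ℝ Q q := fun q h =>
    diffAt_of_contDiffOn hQsm hUopen h (by simp)
  have hθd : ∀ ℓ ∈ Ω₀, DifferentiableAt ℝ θ ℓ := fun ℓ h =>
    diffAt_of_contDiffOn hθsm hΩ₀ h (by simp)
  -- key 1 : s-derivative of G
  have key1 : ∀ q ∈ U, fderiv ℝ G q ((1 : ℝ), (0 : P n)) = -(poisson H2 F1 (Q q)) := by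
    rintro ⟨s, ℓ⟩ ⟨hs, hℓ⟩
    have hc : HasDerivAt (fun r : ℝ => ((r, ℓ) : ℝ × P n)) ((1 : ℝ), (0 : P n)) s :=
      (hasDerivAt_id s).prodMk (hasDerivAt_const s ℓ)
    have h1 := HasFDerivAt.comp_hasDerivAt (f := fun r : ℝ => ((r, ℓ) : ℝ × P n))
      (x := s) (hl := (hGd (s, ℓ) ⟨hs, hℓ⟩).hasFDerivAt) (hf := hc)
    have h2 : HasDerivAt (fun r => H2 (Φ r ℓ))
        (fderiv ℝ H2 (Φ s ℓ) (hamVF F1 (Φ s ℓ))) s :=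
      HasFDerivAt.comp_hasDerivAt (f := fun r => Φ r ℓ) (x := s)
        (hl := (hH2d _ (hΦin ℓ hℓ s hs)).hasFDerivAt) (hf := hΦflow ℓ hℓ s hs)
    have h3 : HasDerivAt (fun r => G (r, ℓ))
        (fderiv ℝ H2 (Φ s ℓ) (hamVF F1 (Φ s ℓ))) s := h2
    rw [h1.unique h3, fderiv_hamVF (hH2d _ (hΦin ℓ hℓ s hs))]
  -- key 2 : s-derivative of Q at (0, ℓS)
  have hθS : θ ℓS = 0 := hθ0 ℓS hℓS hℓS0
  have hσS : σ ℓS = ((0 : ℝ), ℓS) := by rw [hσdef]; simp [hθS]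
  have key2 : fderiv ℝ Q ((0 : ℝ), ℓS) ((1 : ℝ), (0 : P n)) = hamVF F1 ℓS := by
    have hc : HasDerivAt (fun r : ℝ => ((r, ℓS) : ℝ × P n)) ((1 : ℝ), (0 : P n)) 0 :=
      (hasDerivAt_id 0).prodMk (hasDerivAt_const 0 ℓS)
    have h1 := HasFDerivAt.comp_hasDerivAt (f := fun r : ℝ => ((r, ℓS) : ℝ × P n))
      (x := 0) (hl := (hQd (0, ℓS) (hmem0 ℓS hℓS)).hasFDerivAt) (hf := hc)
    have h2 : HasDerivAt (fun r => Q (r, ℓS)) (hamVF F1 (Φ 0 ℓS)) 0 := hΦflow ℓS hℓS 0 h0ε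
    rw [h1.unique h2, hΦ0 ℓS hℓS]
  -- key Q0 : ℓ-derivative of Q at (0, ℓS) is the identity
  have keyQ0 : ∀ v : P n, fderiv ℝ Q ((0 : ℝ), ℓS) ((0 : ℝ), v) = v := by
    have hin : HasFDerivAt (fun ℓ' => Q (0, ℓ'))
        ((fderiv ℝ Q ((0 : ℝ), ℓS)).comp (ContinuousLinearMap.inr ℝ ℝ (P n))) ℓS :=
      (hQd (0, ℓS) (hmem0 ℓS hℓS)).hasFDerivAt.comp ℓS (hasFDerivAt_prodMk_right 0 ℓS)
    have heq : (fun ℓ' => Q (0, ℓ')) =ᶠ[nhds ℓS] id :=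
      Filter.eventually_of_mem (hΩ₀.mem_nhds hℓS) fun ℓ' h => hΦ0 ℓ' h
    have := hin.fderiv
    rw [heq.fderiv_eq, fderiv_id] at this
    intro v
    have h2 : fderiv ℝ Q ((0 : ℝ), ℓS) ((0 : ℝ), v)
        = ((fderiv ℝ Q ((0 : ℝ), ℓS)).comp (ContinuousLinearMap.inr ℝ ℝ (P n))) v := rfl
    rw [h2, ← this]
    rfl
  -- F2 : ℓ-derivative of G at time 0
  have keyF2 : ∀ ℓ ∈ Ω₀, ∀ v : P n,
      fderiv ℝ G ((0 : ℝ), ℓ) ((0 : ℝ), v) = fderiv ℝ H2 ℓ v := by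
    intro ℓ hℓ v
    have hin : HasFDerivAt (fun ℓ' => G (0, ℓ'))
        ((fderiv ℝ G ((0 : ℝ), ℓ)).comp (ContinuousLinearMap.inr ℝ ℝ (P n))) ℓ :=
      (hGd (0, ℓ) (hmem0 ℓ hℓ)).hasFDerivAt.comp ℓ (hasFDerivAt_prodMk_right 0 ℓ)
    have heq : (fun ℓ' => G (0, ℓ')) =ᶠ[nhds ℓ] H2 :=
      Filter.eventually_of_mem (hΩ₀.mem_nhds hℓ) fun ℓ' h => by
        simp only [hGdef, hQdef]; rw [hΦ0 ℓ' h]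
    have := hin.fderiv
    rw [heq.fderiv_eq] at this
    have h2 : fderiv ℝ G ((0 : ℝ), ℓ) ((0 : ℝ), v)
        = ((fderiv ℝ G ((0 : ℝ), ℓ)).comp (ContinuousLinearMap.inr ℝ ℝ (P n))) v := rfl
    rw [h2, this]
  -- split of a tangent vector
  have hsplit : ∀ (t : ℝ) (v : P n),
      ((t, v) : ℝ × P n) = t • ((1 : ℝ), (0 : P n)) + ((0 : ℝ), v) := by
    intro t v
    simp [Prod.ext_iff]
  -- F3 : the first derivative identity on all of Ω₀
  have keyF3 : ∀ ℓ ∈ Ω₀, ∀ v : P n,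
      fderiv ℝ (fun ℓ' => H2 (Φ (θ ℓ') ℓ') - H2 ℓ') ℓ v
        = fderiv ℝ G (σ ℓ) ((0 : ℝ), v) - fderiv ℝ H2 ℓ v := by
    intro ℓ hℓ v
    have hσfd : HasFDerivAt σ
        ((fderiv ℝ θ ℓ).prod (ContinuousLinearMap.id ℝ (P n))) ℓ :=
      (hθd ℓ hℓ).hasFDerivAt.prodMk (hasFDerivAt_id ℓ)
    have hcomp : HasFDerivAt (fun ℓ' => G (σ ℓ'))
        ((fderiv ℝ G (σ ℓ)).comp ((fderiv ℝ θ ℓ).prod (ContinuousLinearMap.id ℝ (P n)))) ℓ :=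
      (hGd (σ ℓ) (hmemσ ℓ hℓ)).hasFDerivAt.comp ℓ hσfd
    have hK : HasFDerivAt (fun ℓ' => H2 (Φ (θ ℓ') ℓ') - H2 ℓ')
        (((fderiv ℝ G (σ ℓ)).comp ((fderiv ℝ θ ℓ).prod (ContinuousLinearMap.id ℝ (P n))))
          - fderiv ℝ H2 ℓ) ℓ :=
      hcomp.sub (hH2d ℓ (hΩ₀Ω hℓ)).hasFDerivAt
    rw [hK.fderiv]
    have h1 : (((fderiv ℝ G (σ ℓ)).comp ((fderiv ℝ θ ℓ).prod (ContinuousLinearMap.id ℝ (P n))))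
        - fderiv ℝ H2 ℓ) v = fderiv ℝ G (σ ℓ) ((fderiv ℝ θ ℓ v, v)) - fderiv ℝ H2 ℓ v := rfl
    rw [h1, hsplit (fderiv ℝ θ ℓ v) v, map_add, map_smul, key1 (σ ℓ) (hmemσ ℓ hℓ)]
    have : Q (σ ℓ) = Φ (θ ℓ) ℓ := rfl
    rw [this, hθ ℓ hℓ]
    simp
  refine ⟨?_, ?_, ?_⟩
  · -- first derivative vanishes
    apply ContinuousLinearMap.ext
    intro v
    rw [keyF3 ℓS hℓS v, hσS, keyF2 ℓS hℓS v]
    simp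
  · -- second derivative
    intro δ
    have hLne : poisson F1 (poisson H2 F1) ℓS ≠ 0 := ne_of_gt (hL ℓS (hΩ₀Ω hℓS))
    have hσfdS : HasFDerivAt σ
        ((fderiv ℝ θ ℓS).prod (ContinuousLinearMap.id ℝ (P n))) ℓS :=
      (hθd ℓS hℓS).hasFDerivAt.prodMk (hasFDerivAt_id ℓS)
    set Dθ := fderiv ℝ θ ℓS with hDθdef
    set Dσ := Dθ.prod (ContinuousLinearMap.id ℝ (P n)) with hDσdef
    set dd := fderiv ℝ (poisson H2 F1) ℓS δ with hdddef
    set Lv := poisson F1 (poisson H2 F1) ℓS with hLvdef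
    -- Step C : compute Dθ δ
    have hQσ0 : Q ((0 : ℝ), ℓS) = ℓS := hΦ0 ℓS hℓS
    have hQdS : HasFDerivAt Q (fderiv ℝ Q ((0 : ℝ), ℓS)) (σ ℓS) := by
      rw [hσS]; exact (hQd _ (hmem0 ℓS hℓS)).hasFDerivAt
    have hH23fd : HasFDerivAt (poisson H2 F1) (fderiv ℝ (poisson H2 F1) ℓS) (Q (σ ℓS)) := by
      rw [hσS, hQσ0]; exact (hH23d ℓS (hΩ₀Ω hℓS)).hasFDerivAt
    have hZ : HasFDerivAt (fun ℓ => poisson H2 F1 (Q (σ ℓ)))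
        ((fderiv ℝ (poisson H2 F1) ℓS).comp ((fderiv ℝ Q ((0 : ℝ), ℓS)).comp Dσ)) ℓS :=
      HasFDerivAt.comp (g := poisson H2 F1) ℓS hH23fd (hQdS.comp ℓS hσfdS)
    have hZ0 : (fun ℓ => poisson H2 F1 (Q (σ ℓ))) =ᶠ[nhds ℓS] fun _ => (0 : ℝ) :=
      Filter.eventually_of_mem (hΩ₀.mem_nhds hℓS) fun ℓ h => hθ ℓ h
    have hZder := hZ.fderiv
    rw [hZ0.fderiv_eq, fderiv_const_apply] at hZder
    have hT : ((fderiv ℝ (poisson H2 F1) ℓS).comp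
        ((fderiv ℝ Q ((0 : ℝ), ℓS)).comp Dσ)) δ = 0 := by
      rw [← hZder]; rfl
    have hZval : fderiv ℝ (poisson H2 F1) ℓS
        (fderiv ℝ Q ((0 : ℝ), ℓS) (Dθ δ, δ)) = 0 := hT
    have hDθδ : Dθ δ * Lv + dd = 0 := by
      rw [hsplit (Dθ δ) δ, map_add, map_smul, key2, keyQ0 δ, map_add, map_smul,
        fderiv_hamVF (hH23d ℓS (hΩ₀Ω hℓS)), poisson_antisymm] at hZval
      simpa [smul_eq_mul, neg_neg, hLvdef, hdddef] using hZval
    have hDθδ' : Dθ δ = -dd / Lv := by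
      field_simp
      linarith [hDθδ]
    -- Step B : second derivative computation
    have hfdG : ContDiffOn ℝ (⊤ : ℕ∞) (fderiv ℝ G) U := hGsm.fderiv_of_isOpen hUopen (by simp)
    have hfdGdAt : DifferentiableAt ℝ (fderiv ℝ G) ((0 : ℝ), ℓS) :=
      diffAt_of_contDiffOn hfdG hUopen (hmem0 ℓS hℓS) one_le_inf
    have hfdH2 : ContDiffOn ℝ (⊤ : ℕ∞) (fderiv ℝ H2) Ω := hH2.fderiv_of_isOpen hΩ (by simp)
    have hfdH2dAt : DifferentiableAt ℝ (fderiv ℝ H2) ℓS :=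
      diffAt_of_contDiffOn hfdH2 hΩ (hΩ₀Ω hℓS) one_le_inf
    have hDGσfd : HasFDerivAt (fun ℓ => fderiv ℝ G (σ ℓ))
        ((fderiv ℝ (fderiv ℝ G) ((0 : ℝ), ℓS)).comp Dσ) ℓS := by
      have h0 : HasFDerivAt (fderiv ℝ G) (fderiv ℝ (fderiv ℝ G) ((0 : ℝ), ℓS)) (σ ℓS) := by
        rw [hσS]; exact hfdGdAt.hasFDerivAt
      exact h0.comp ℓS hσfdS
    have hWev : (fun ℓ => fderiv ℝ (fun ℓ' => H2 (Φ (θ ℓ') ℓ') - H2 ℓ') ℓ δ)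
        =ᶠ[nhds ℓS] (fun ℓ => fderiv ℝ G (σ ℓ) ((0 : ℝ), δ) - fderiv ℝ H2 ℓ δ) :=
      Filter.eventually_of_mem (hΩ₀.mem_nhds hℓS) fun ℓ h => keyF3 ℓ h δ
    rw [hWev.fderiv_eq]
    have hBfd : HasFDerivAt (fun ℓ => fderiv ℝ G (σ ℓ) ((0 : ℝ), δ))
        ((ContinuousLinearMap.apply ℝ ℝ ((0 : ℝ), δ)).comp
          ((fderiv ℝ (fderiv ℝ G) ((0 : ℝ), ℓS)).comp Dσ)) ℓS :=
      (ContinuousLinearMap.apply ℝ ℝ ((0 : ℝ), δ)).hasFDerivAt.comp ℓS hDGσfd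
    have hCfd : HasFDerivAt (fun ℓ => fderiv ℝ H2 ℓ δ)
        ((ContinuousLinearMap.apply ℝ ℝ δ).comp (fderiv ℝ (fderiv ℝ H2) ℓS)) ℓS :=
      (ContinuousLinearMap.apply ℝ ℝ δ).hasFDerivAt.comp ℓS hfdH2dAt.hasFDerivAt
    rw [(hBfd.fun_sub hCfd).fderiv]
    -- symmetry of the second derivative of G
    have hsymm := ((hGsm.contDiffAt (hUopen.mem_nhds (hmem0 ℓS hℓS))).isSymmSndFDerivAt
      (by rw [minSmoothness_of_isRCLikeNormedField]; exact WithTop.coe_le_coe.mpr (le_top : (2 : ℕ∞) ≤ ⊤))).eq ((1 : ℝ), (0 : P n)) ((0 : ℝ), δ)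
    -- the mixed term
    have hterm1 : fderiv ℝ (fderiv ℝ G) ((0 : ℝ), ℓS) ((0 : ℝ), δ) ((1 : ℝ), (0 : P n))
        = -dd := by
      rw [← fderiv_apply_comm hfdGdAt ((1 : ℝ), (0 : P n)) ((0 : ℝ), δ)]
      have ev1 : (fun q => fderiv ℝ G q ((1 : ℝ), (0 : P n)))
          =ᶠ[nhds ((0 : ℝ), ℓS)] (fun q => -(poisson H2 F1 (Q q))) :=
        Filter.eventually_of_mem (hUopen.mem_nhds (hmem0 ℓS hℓS)) fun q hq => key1 q hq
      rw [ev1.fderiv_eq]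
      have hQcomp : HasFDerivAt (fun q => poisson H2 F1 (Q q))
          ((fderiv ℝ (poisson H2 F1) ℓS).comp (fderiv ℝ Q ((0 : ℝ), ℓS))) ((0 : ℝ), ℓS) := by
        have hp : HasFDerivAt (poisson H2 F1) (fderiv ℝ (poisson H2 F1) ℓS)
            (Q ((0 : ℝ), ℓS)) := by
          rw [hQσ0]; exact (hH23d ℓS (hΩ₀Ω hℓS)).hasFDerivAt
        exact hp.comp _ (hQd _ (hmem0 ℓS hℓS)).hasFDerivAt
      rw [hQcomp.fun_neg.fderiv]
      have : fderiv ℝ Q ((0 : ℝ), ℓS) ((0 : ℝ), δ) = δ := keyQ0 δ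
      simp [this, hdddef]
    -- the pure-space term
    have hterm2 : fderiv ℝ (fderiv ℝ G) ((0 : ℝ), ℓS) ((0 : ℝ), δ) ((0 : ℝ), δ)
        = fderiv ℝ (fderiv ℝ H2) ℓS δ δ := by
      rw [← fderiv_apply_comm hfdGdAt ((0 : ℝ), δ) ((0 : ℝ), δ)]
      have hq2fd : HasFDerivAt (fun q => fderiv ℝ G q ((0 : ℝ), δ))
          (fderiv ℝ (fun q => fderiv ℝ G q ((0 : ℝ), δ)) ((0 : ℝ), ℓS)) ((0 : ℝ), ℓS) := by
        have : DifferentiableAt ℝ (fun q => fderiv ℝ G q ((0 : ℝ), δ)) ((0 : ℝ), ℓS) :=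
          ((ContinuousLinearMap.apply ℝ ℝ ((0 : ℝ), δ)).hasFDerivAt.comp _
            hfdGdAt.hasFDerivAt).differentiableAt
        exact this.hasFDerivAt
      have hgfd : HasFDerivAt (fun ℓ => fderiv ℝ G ((0 : ℝ), ℓ) ((0 : ℝ), δ))
          ((fderiv ℝ (fun q => fderiv ℝ G q ((0 : ℝ), δ)) ((0 : ℝ), ℓS)).comp
            (ContinuousLinearMap.inr ℝ ℝ (P n))) ℓS :=
        hq2fd.comp ℓS (hasFDerivAt_prodMk_right (0 : ℝ) ℓS)
      have ev2 : (fun ℓ => fderiv ℝ G ((0 : ℝ), ℓ) ((0 : ℝ), δ))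
          =ᶠ[nhds ℓS] (fun ℓ => fderiv ℝ H2 ℓ δ) :=
        Filter.eventually_of_mem (hΩ₀.mem_nhds hℓS) fun ℓ h => keyF2 ℓ h δ
      have h1 : fderiv ℝ (fun q => fderiv ℝ G q ((0 : ℝ), δ)) ((0 : ℝ), ℓS) ((0 : ℝ), δ)
          = fderiv ℝ (fun ℓ => fderiv ℝ G ((0 : ℝ), ℓ) ((0 : ℝ), δ)) ℓS δ := by
        rw [hgfd.fderiv]; rfl
      rw [h1, ev2.fderiv_eq, fderiv_apply_comm hfdH2dAt δ δ]
    -- put everything together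
    have hDσδ : Dσ δ = (Dθ δ, δ) := rfl
    simp only [ContinuousLinearMap.coe_sub', Pi.sub_apply, ContinuousLinearMap.coe_comp',
      Function.comp_apply, ContinuousLinearMap.apply_apply]
    rw [hDσδ, hsplit (Dθ δ) δ, map_add, map_smul, ContinuousLinearMap.add_apply,
      ContinuousLinearMap.smul_apply, hsymm, hterm1, hterm2, hDθδ']
    field_simp
    ring
    field_simp
  · -- hamiltonian vector fields agree
    have hHtd : DifferentiableAt ℝ (fun ℓ => H2 (Φ (θ ℓ) ℓ)) ℓS := by
      have hσfd : HasFDerivAt σ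
          ((fderiv ℝ θ ℓS).prod (ContinuousLinearMap.id ℝ (P n))) ℓS :=
        (hθd ℓS hℓS).hasFDerivAt.prodMk (hasFDerivAt_id ℓS)
      exact ((hGd (σ ℓS) (hmemσ ℓS hℓS)).hasFDerivAt.comp ℓS hσfd).differentiableAt
    have hH2dS : DifferentiableAt ℝ H2 ℓS := hH2d ℓS (hΩ₀Ω hℓS)
    have hfeq : fderiv ℝ (fun ℓ => H2 (Φ (θ ℓ) ℓ)) ℓS = fderiv ℝ H2 ℓS := by
      have hz : fderiv ℝ (fun ℓ => H2 (Φ (θ ℓ) ℓ) - H2 ℓ) ℓS = 0 := by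
        apply ContinuousLinearMap.ext
        intro v
        rw [keyF3 ℓS hℓS v, hσS, keyF2 ℓS hℓS v]
        simp
      rw [fderiv_fun_sub hHtd hH2dS] at hz
      exact sub_eq_zero.mp hz
    unfold hamVF
    rw [gradP_eq hHtd, gradP_eq hH2dS, gradX_eq hHtd, gradX_eq hH2dS, hfeq]
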